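/- arXiv:2108.03474 — 2 statements merged into one kernel-verified Lean document; each statement's English description precedes it below -/
import Mathlib

section
/- Let l : List α be a finite list and f : α → ℕ a cost function, and define step(S, x) to be the list obtained from the sorted list S by inserting x in sorted position (by f) and then truncating to the first k elements. Then the result of folding step over l starting from the empty list is a sorted list consisting of min(k, |l|) elements of l whose multiset of f-values equals the k smallest f-values occurring in l (with multiplicity). -/
/-!
Folding `step` over `l` is insertion sort of `l.reverse` in which the window is truncated to
length `k` after every insertion. Truncating before an insertion does not change the first `k`
entries afterwards, so the result is the first `k` entries of `l.reverse.insertionSort`.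
Applying `f` turns this into insertion sort of the `f`-values, and as `≤` on `ℕ` is
antisymmetric, sorting does not see the reversal.
-/

/-- One step of the window-based smart enumeration: insert `x` into the
sorted window `S` (sorted by cost `f`) and truncate to the first `k`
elements. -/
def step {α : Type*} (k : ℕ) (f : α → ℕ) (S : List α) (x : α) : List α :=
  (List.orderedInsert (fun a b => f a ≤ f b) x S).take k

namespace List

variable {α : Type*} (r : α → α → Prop) [DecidableRel r]

theorem take_orderedInsert_take (a : α) (k : ℕ) (l : List α) :
    ((l.take k).orderedInsert r a).take k = (l.orderedInsert r a).take k := by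
  induction l generalizing k with
  | nil => simp
  | cons b l ih =>
    cases k with
    | zero => simp
    | succ k =>
      by_cases hab : r a b
      · cases k <;> simp [hab, take_take]
      · simp [hab, ih]

theorem foldr_take_orderedInsert (k : ℕ) (l : List α) :
    l.foldr (fun a S => (S.orderedInsert r a).take k) [] = (l.insertionSort r).take k := by
  induction l with
  | nil => simp
  | cons a l ih => rw [foldr_cons, ih, take_orderedInsert_take, insertionSort_cons]

theorem insertionSort_eq_of_perm [Std.Antisymm r] [Std.Total r] [IsTrans α r] {l₁ l₂ : List α}
    (h : l₁ ~ l₂) : l₁.insertionSort r = l₂.insertionSort r :=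
  (((perm_insertionSort r l₁).trans h).trans (perm_insertionSort r l₂).symm).eq_of_pairwise'
    (pairwise_insertionSort r l₁) (pairwise_insertionSort r l₂)

end List

theorem foldl_step_eq_take_insertionSort {α : Type*} (k : ℕ) (f : α → ℕ) (l : List α) :
    l.foldl (step k f) [] = (l.reverse.insertionSort (fun a b => f a ≤ f b)).take k := by
  rw [List.foldl_eq_foldr_reverse, ← List.foldr_take_orderedInsert]
  rfl

/-- Folding `step` over a list `l` yields a list, sorted by `f`, of
`min k |l|` elements drawn from `l` (with multiplicity) whose multiset of
`f`-values is exactly the `k` smallest `f`-values occurring in `l`. -/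
theorem smart_enumeration_invariant {α : Type*} (k : ℕ) (f : α → ℕ)
    (l : List α) :
    (l.foldl (step k f) []).Pairwise (fun a b => f a ≤ f b) ∧
    (l.foldl (step k f) []).length = min k l.length ∧
    (↑(l.foldl (step k f) []) : Multiset α) ≤ ↑l ∧
    ((l.foldl (step k f) []).map f : Multiset ℕ) =
      ↑(((l.map f).insertionSort (· ≤ ·)).take k) := by
  rw [foldl_step_eq_take_insertionSort]
  have hmap : ((l.reverse.insertionSort (fun a b => f a ≤ f b)).take k).map f
      = ((l.map f).insertionSort (· ≤ ·)).take k := by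
    rw [List.map_take, List.map_insertionSort _ _ f _ (fun _ _ _ _ => Iff.rfl), List.map_reverse,
      List.insertionSort_eq_of_perm _ (List.reverse_perm _)]
  refine ⟨?_, ?_, ?_, by rw [hmap]⟩
  · rw [← List.pairwise_map, hmap]
    exact (List.pairwise_insertionSort _ _).take
  · simp [List.length_insertionSort]
  · exact Multiset.coe_le.mpr
      (((List.take_sublist _ _).subperm.trans (List.perm_insertionSort _ _).subperm).trans
        (List.reverse_perm l).subperm)
end

section
/- Fix n ≥ 1 and consider the map f(a,b) = Σ_{i=1}^{n} 2^{i-1}·aᵢ on the set T of pairs (a,b) ∈ {0,1}ⁿ × {0,1}ⁿ satisfying ((b₁ = 1 ∧ ¬(val(a₂…aₙ) < val(b₂…bₙ))) ∨ (b₁ = 0 ∧ val(a₂…aₙ) < val(b₂…bₙ))). Then f takes exactly 2ⁿ distinct values on T (namely all of 0,…,2ⁿ−1), and each value is attained by exactly 2^{n-1} elements of T. -/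
/-- Value of the suffix `x₂…xₙ` of a bit string (1-indexed bits stored at
0-based indices): `val x = Σ_{i=2}^{n} 2^{i-2}·xᵢ`. -/
def suffixVal {n : ℕ} (x : Fin n → Bool) : ℕ :=
  ∑ i ∈ Finset.univ.filter (fun i : Fin n => 0 < (i : ℕ)),
    2 ^ ((i : ℕ) - 1) * (if x i then 1 else 0)

/-- The condition defining the answer sets of `Pₙ`. -/
def pairCond {n : ℕ} (hn : 1 ≤ n) (a b : Fin n → Bool) : Prop :=
  (b ⟨0, hn⟩ = true ∧ ¬ (suffixVal a < suffixVal b)) ∨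
  (b ⟨0, hn⟩ = false ∧ suffixVal a < suffixVal b)

instance {n : ℕ} (hn : 1 ≤ n) (a b : Fin n → Bool) :
    Decidable (pairCond hn a b) := by unfold pairCond; infer_instance

/-- The objective function `f(a,b) = Σ_{i=1}^{n} 2^{i-1}·aᵢ`. -/
def objVal {n : ℕ} (a : Fin n → Bool) : ℕ :=
  ∑ i : Fin n, 2 ^ (i : ℕ) * (if a i then 1 else 0)

/-!
`objVal` is the binary expansion, a bijection from `{0,1}ⁿ` onto `{0,…,2ⁿ−1}`, so a value `v`
pins down `a`. For fixed `a`, the condition on `b` only says that the first bit of `b` is the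
negation of `[val a < val b]`, and `val b` depends only on the remaining `n − 1` bits; hence
exactly one of the two choices of `b₁` works for each of the `2^{n-1}` tails.
-/

open Finset

theorem card_filter_apply_zero_eq_tail {α : Type*} [Fintype α] [DecidableEq α] {m : ℕ}
    (g : (Fin m → α) → α) :
    #(univ.filter fun b : Fin (m + 1) → α => b 0 = g (Fin.tail b)) = Fintype.card α ^ m := by
  rw [show Fintype.card α ^ m = #(univ : Finset (Fin m → α)) by simp]
  symm
  refine card_bij' (fun t _ => Fin.cons (g t) t) (fun b _ => Fin.tail b) (by simp) (by simp)
    (by simp) fun b hb => ?_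
  rw [(mem_filter.mp hb).2.symm, Fin.cons_self_tail]

theorem suffixVal_eq_objVal_tail {m : ℕ} (x : Fin (m + 1) → Bool) :
    suffixVal x = objVal (Fin.tail x) := by
  simp only [suffixVal, objVal, sum_filter, Fin.sum_univ_succ]
  refine (zero_add _).trans (sum_congr rfl fun i _ => ?_)
  cases h : x i.succ <;> simp [Fin.tail, h]

theorem pairCond_iff {m : ℕ} (hn : 1 ≤ m + 1) (a b : Fin (m + 1) → Bool) :
    pairCond hn a b ↔ b 0 = !decide (objVal (Fin.tail a) < objVal (Fin.tail b)) := by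
  rw [pairCond, suffixVal_eq_objVal_tail, suffixVal_eq_objVal_tail]
  cases hb : b 0 <;> simp [hb, Fin.zero_eta]

theorem card_filter_pairCond {m : ℕ} (hn : 1 ≤ m + 1) (a : Fin (m + 1) → Bool) :
    #(univ.filter (pairCond hn a)) = 2 ^ m := by
  simp_rw [pairCond_iff]
  exact card_filter_apply_zero_eq_tail (α := Bool) fun t => !decide (objVal (Fin.tail a) < objVal t)

def objValEquiv (n : ℕ) : (Fin n → Bool) ≃ Fin (2 ^ n) :=
  (Equiv.arrowCongr (Equiv.refl (Fin n)) finTwoEquiv.symm).trans finFunctionFinEquiv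

theorem objValEquiv_apply {n : ℕ} (a : Fin n → Bool) : (objValEquiv n a : ℕ) = objVal a := by
  simp only [objValEquiv, objVal, Equiv.trans_apply, finFunctionFinEquiv_apply]
  refine sum_congr rfl fun i _ => ?_
  cases h : a i <;> simp [h, finTwoEquiv, mul_comm]

theorem objVal_lt {n : ℕ} (a : Fin n → Bool) : objVal a < 2 ^ n :=
  objValEquiv_apply a ▸ (objValEquiv n a).isLt

theorem objVal_eq_iff {n v : ℕ} (hv : v < 2 ^ n) (a : Fin n → Bool) :
    objVal a = v ↔ a = (objValEquiv n).symm ⟨v, hv⟩ := by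
  rw [Equiv.eq_symm_apply, Fin.ext_iff, objValEquiv_apply]

theorem card_filter_pairCond_objVal_eq {m v : ℕ} (hn : 1 ≤ m + 1) (hv : v < 2 ^ (m + 1)) :
    #(univ.filter fun p : (Fin (m + 1) → Bool) × (Fin (m + 1) → Bool) =>
      pairCond hn p.1 p.2 ∧ objVal p.1 = v) = 2 ^ m := by
  obtain ⟨a, ha⟩ : ∃ a, ∀ a', objVal a' = v ↔ a' = a := ⟨_, objVal_eq_iff hv⟩
  have hfiber : (univ.filter fun p : (Fin (m + 1) → Bool) × (Fin (m + 1) → Bool) =>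
      pairCond hn p.1 p.2 ∧ objVal p.1 = v) = {a} ×ˢ univ.filter (pairCond hn a) := by
    ext ⟨a', b⟩
    simp only [ha, mem_filter, mem_univ, true_and, mem_product, mem_singleton]
    exact ⟨fun ⟨h, rfl⟩ => ⟨rfl, h⟩, fun ⟨rfl, h⟩ => ⟨h, rfl⟩⟩
  rw [hfiber, card_product, card_singleton, one_mul, card_filter_pairCond]

/-- On the set `T` of pairs satisfying the condition, the objective takes
exactly the `2ⁿ` values `0,…,2ⁿ−1`, and each value is attained by exactly
`2^{n-1}` elements of `T`. -/
theorem objVal_distribution {n : ℕ} (hn : 1 ≤ n) :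
    ((Finset.univ.filter
        (fun p : (Fin n → Bool) × (Fin n → Bool) => pairCond hn p.1 p.2)).image
        (fun p => objVal p.1)) = Finset.range (2 ^ n)
    ∧
    ∀ v < 2 ^ n,
      ((Finset.univ.filter
          (fun p : (Fin n → Bool) × (Fin n → Bool) =>
            pairCond hn p.1 p.2 ∧ objVal p.1 = v)).card) = 2 ^ (n - 1) := by
  obtain ⟨m, rfl⟩ : ∃ m, n = m + 1 := ⟨n - 1, by omega⟩
  refine ⟨?_, fun v hv => card_filter_pairCond_objVal_eq hn hv⟩
  ext v
  simp only [mem_image, mem_filter, mem_univ, true_and, mem_range]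
  refine ⟨fun ⟨p, _, hp⟩ => hp ▸ objVal_lt p.1, fun hv => ?_⟩
  obtain ⟨p, hp⟩ : (univ.filter fun p : (Fin (m + 1) → Bool) × (Fin (m + 1) → Bool) =>
      pairCond hn p.1 p.2 ∧ objVal p.1 = v).Nonempty := by
    rw [← card_pos, card_filter_pairCond_objVal_eq hn hv]
    positivity
  exact ⟨p, (mem_filter.mp hp).2⟩
end
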